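/- The function φ(σ,τ) = |στ⁻¹| - |τ| on pairs of noncrossing permutations is multiplicative in the sense that φ(σ,γ) = φ(σ,σ) for all σ ∈ NC_p; that is, |σγ⁻¹| - 1 = p - |σ| = |σσ⁻¹| - |σ|. -/

import Mathlib

/-- The number of cycles of a permutation (fixed points counted as cycles),
i.e. the number of orbits. -/
noncomputable def cycleCount {p : ℕ} (σ : Equiv.Perm (Fin p)) : ℕ :=
  Nat.card (Quotient (Equiv.Perm.SameCycle.setoid σ))

/-- A permutation of `{0,...,p-1}` arises from a noncrossing partition by cycling
inside each block (sending each element of a block to the next larger one, and the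
largest back to the smallest), with the blocks (= cycles) forming a noncrossing
partition. -/
def IsNoncrossingPerm {p : ℕ} (σ : Equiv.Perm (Fin p)) : Prop :=
  (∀ x y : Fin p, σ.SameCycle x y →
      (x < σ x → ¬(x < y ∧ y < σ x)) ∧ (σ x ≤ x → σ x ≤ y ∧ y ≤ x)) ∧
  (∀ a b c d : Fin p, a < b → b < c → c < d →
      σ.SameCycle a c → σ.SameCycle b d → σ.SameCycle a b)

/-!
Let `x` be the largest point moved by a noncrossing `σ`. Noncrossingness forces `σ x` to be the
smallest element of the cycle of `x`, and `σ' = (x σx) σ`, which cuts `x` out of its cycle, is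
again noncrossing and has one cycle more. On the other side, `σγ⁻¹` maps `y ∈ (σx, x]` to
`σ (y - 1) ∈ (σx, x]`, so `x` and `σ x` lie in different cycles of `σγ⁻¹`, and
`σ'γ⁻¹ = (x σx) σγ⁻¹` has one cycle fewer. Hence `|σγ⁻¹| + |σ| = p + 1` by induction on the
support, starting from `|γ⁻¹| + |1| = 1 + p`.
-/

open Equiv Equiv.Perm Function

namespace Setoid

variable {α : Type*} {r t : Setoid α} {a b : α}

/-- The join of `r` with the identification `a ~ b`. -/
def glue (r : Setoid α) (a b : α) : Setoid α where
  r x y := r x y ∨ (r x a ∧ r b y) ∨ (r x b ∧ r a y)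
  iseqv :=
    { refl x := Or.inl (r.refl x)
      symm := by
        rintro x y (h | ⟨h₁, h₂⟩ | ⟨h₁, h₂⟩)
        exacts [Or.inl (r.symm h), Or.inr (Or.inr ⟨r.symm h₂, r.symm h₁⟩),
          Or.inr (Or.inl ⟨r.symm h₂, r.symm h₁⟩)]
      trans := by
        rintro x y z (h | ⟨h₁, h₂⟩ | ⟨h₁, h₂⟩) (g | ⟨g₁, g₂⟩ | ⟨g₁, g₂⟩)
        exacts [Or.inl (r.trans h g), Or.inr (Or.inl ⟨r.trans h g₁, g₂⟩),
          Or.inr (Or.inr ⟨r.trans h g₁, g₂⟩), Or.inr (Or.inl ⟨h₁, r.trans h₂ g⟩),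
          Or.inr (Or.inl ⟨h₁, g₂⟩), Or.inl (r.trans h₁ g₂), Or.inr (Or.inr ⟨h₁, r.trans h₂ g⟩),
          Or.inl (r.trans h₁ g₂), Or.inr (Or.inr ⟨h₁, g₂⟩)] }

theorem le_glue : r ≤ r.glue a b := fun _ _ h => Or.inl h

theorem glue_le (hr : r ≤ t) (hab : t a b) : r.glue a b ≤ t := by
  rintro x y (h | ⟨h₁, h₂⟩ | ⟨h₁, h₂⟩)
  exacts [hr h, t.trans (t.trans (hr h₁) hab) (hr h₂),
    t.trans (t.trans (hr h₁) (t.symm hab)) (hr h₂)]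

theorem glue_eq_self (hab : r a b) : r.glue a b = r :=
  le_antisymm (glue_le le_rfl hab) le_glue

theorem card_quotient_glue_add_one [Finite α] (hab : ¬ r a b) :
    Nat.card (Quotient (r.glue a b)) + 1 = Nat.card (Quotient r) := by
  classical
  let φ : {q : Quotient r // q ≠ ⟦b⟧} → Quotient (r.glue a b) :=
    fun q => Quotient.map' id (fun _ _ => Or.inl) q.1
  have hφ : Bijective φ := by
    constructor
    · rintro ⟨⟨x⟩, hx⟩ ⟨⟨y⟩, hy⟩ hxy
      rcases Quotient.exact hxy with h | ⟨-, h⟩ | ⟨h, -⟩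
      · exact Subtype.ext (Quotient.sound h)
      · exact absurd (Quotient.sound (r.symm h)) hy
      · exact absurd (Quotient.sound h) hx
    · rintro ⟨y⟩
      by_cases hy : r y b
      · exact ⟨⟨⟦a⟧, fun e => hab (Quotient.exact e)⟩,
          Quotient.sound (Or.inr (Or.inl ⟨r.refl a, r.symm hy⟩))⟩
      · exact ⟨⟨⟦y⟧, fun e => hy (Quotient.exact e)⟩, rfl⟩
  rw [← Nat.card_eq_of_bijective φ hφ, ← Finite.card_option,
    Nat.card_congr (Equiv.optionSubtypeNe _)]

end Setoid

namespace Equiv.Perm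

variable {α : Type*} {f : Perm α} {a b x y : α}

noncomputable def numCycles (f : Perm α) : ℕ :=
  Nat.card (Quotient (SameCycle.setoid f))

theorem numCycles_one : numCycles (1 : Perm α) = Nat.card α :=
  (Nat.card_eq_of_bijective (Quotient.mk (SameCycle.setoid 1))
    ⟨fun _ _ h => sameCycle_one.1 (Quotient.exact h), Quotient.mk_surjective⟩).symm

theorem numCycles_eq_one [Nonempty α] (h : ∀ x y, f.SameCycle x y) : numCycles f = 1 :=
  Nat.card_eq_one_iff_unique.2
    ⟨⟨by rintro ⟨x⟩ ⟨y⟩; exact Quotient.sound (h x y)⟩, ⟨⟦Classical.arbitrary α⟧⟩⟩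

theorem numCycles_inv : numCycles f⁻¹ = numCycles f := by
  rw [numCycles, numCycles, show SameCycle.setoid f⁻¹ = SameCycle.setoid f from
    Setoid.ext fun _ _ => sameCycle_inv]

theorem apply_lt_of_isGreatest_support [LinearOrder α] [Fintype α]
    (hx : IsGreatest (f.support : Set α) x) : f x < x :=
  lt_of_le_of_ne (hx.2 (apply_mem_support.2 hx.1)) (Perm.mem_support.1 hx.1)

section Finite

variable [Finite α]

theorem SameCycle.mem_of_mapsTo {s : Set α} (hs : Set.MapsTo f s s) (h : f.SameCycle x y)
    (hx : x ∈ s) : y ∈ s := by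
  obtain ⟨i, rfl⟩ := h.exists_nat_pow_eq
  exact hs.iterate i hx

theorem SameCycle.exists_pow_lt_of_pow_eq {k : ℕ} (h : f.SameCycle x y) (hk : (f ^ k) x = x)
    (hk₀ : 0 < k) : ∃ i < k, (f ^ i) x = y := by
  obtain ⟨i, rfl⟩ := h.exists_nat_pow_eq
  exact ⟨i % k, Nat.mod_lt i hk₀, IsPeriodicPt.iterate_mod_apply hk i⟩

end Finite

variable [DecidableEq α]

theorem swap_mul_pow_apply {i : ℕ} (hi : 0 < i)
    (h : ∀ j, 0 < j → j < i → (f ^ j) a ≠ a ∧ (f ^ j) a ≠ b) :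
    ((swap a b * f) ^ i) a = swap a b ((f ^ i) a) := by
  induction i with
  | zero => exact absurd hi (lt_irrefl 0)
  | succ i ih =>
    rcases Nat.eq_zero_or_pos i with rfl | hi
    · rfl
    · obtain ⟨ha, hb⟩ := h i hi (Nat.lt_succ_self i)
      rw [pow_succ', mul_apply, ih hi fun j hj hji => h j hj (hji.trans (Nat.lt_succ_self i)),
        swap_apply_of_ne_of_ne ha hb, pow_succ', mul_apply, mul_apply]

variable [Finite α]

theorem sameCycle_swap_mul_iff (hab : a ≠ b) :
    (swap a b * f).SameCycle a b ↔ ¬ f.SameCycle a b := by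
  classical
  -- Follow the `f`-orbit of `a` up to its first return to `{a, b}`; until then `swap a b * f`
  -- agrees with `f`, and at that time exactly one of the two closes a cycle without meeting `b`.
  have hP : ∃ k, 0 < k ∧ ((f ^ k) a = a ∨ (f ^ k) a = b) :=
    ⟨orderOf f, orderOf_pos f, Or.inl (by rw [pow_orderOf_eq_one]; rfl)⟩
  obtain ⟨hk₀, hk⟩ := Nat.find_spec hP
  have hmin : ∀ j, 0 < j → j < Nat.find hP → (f ^ j) a ≠ a ∧ (f ^ j) a ≠ b :=
    fun j hj hjk => not_or.1 fun h => Nat.find_min hP hjk ⟨hj, h⟩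
  have hpow := swap_mul_pow_apply hk₀ hmin
  have hne : ∀ j < Nat.find hP, (f ^ j) a ≠ b ∧ ((swap a b * f) ^ j) a ≠ b := by
    intro j hj
    rcases Nat.eq_zero_or_pos j with rfl | hj₀
    · exact ⟨hab, hab⟩
    · obtain ⟨ha, hb⟩ := hmin j hj₀ hj
      rw [swap_mul_pow_apply hj₀ fun i hi hij => hmin i hi (hij.trans hj),
        swap_apply_of_ne_of_ne ha hb]
      exact ⟨hb, hb⟩
  rcases hk with hk | hk
  · rw [hk, swap_apply_left] at hpow
    refine iff_of_true ⟨Nat.find hP, by rwa [zpow_natCast]⟩ fun h => ?_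
    obtain ⟨j, hj, hjb⟩ := h.exists_pow_lt_of_pow_eq hk hk₀
    exact (hne j hj).1 hjb
  · rw [hk, swap_apply_right] at hpow
    refine iff_of_false (fun h => ?_) (not_not.2 ⟨Nat.find hP, by rwa [zpow_natCast]⟩)
    obtain ⟨j, hj, hjb⟩ := h.exists_pow_lt_of_pow_eq hpow hk₀
    exact (hne j hj).2 hjb

theorem sameCycle_setoid_swap_mul_le :
    SameCycle.setoid (swap a b * f) ≤ (SameCycle.setoid f).glue a b := by
  intro x y h
  obtain ⟨i, rfl⟩ := h.exists_nat_pow_eq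
  induction i with
  | zero => exact Setoid.refl' _ x
  | succ i ih =>
    refine Setoid.trans' _ (ih ⟨i, rfl⟩) ?_
    set z := ((swap a b * f) ^ i) x
    have hz : f.SameCycle z (f z) := sameCycle_apply_right.2 SameCycle.rfl
    rw [pow_succ', mul_apply, mul_apply, swap_apply_def]
    split_ifs with ha hb
    · exact Or.inr (Or.inl ⟨ha ▸ hz, SameCycle.rfl⟩)
    · exact Or.inr (Or.inr ⟨hb ▸ hz, SameCycle.rfl⟩)
    · exact Or.inl hz

theorem numCycles_swap_mul_of_sameCycle (hab : a ≠ b) (h : f.SameCycle a b) :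
    numCycles (swap a b * f) = numCycles f + 1 := by
  have hsplit : ¬ (swap a b * f).SameCycle a b := fun h' => (sameCycle_swap_mul_iff hab).1 h' h
  have hglue : (SameCycle.setoid (swap a b * f)).glue a b = SameCycle.setoid f := by
    refine le_antisymm (Setoid.glue_le ?_ h) ?_
    · exact sameCycle_setoid_swap_mul_le.trans (Setoid.glue_eq_self h).le
    · simpa only [swap_mul_self_mul] using
        sameCycle_setoid_swap_mul_le (f := swap a b * f) (a := a) (b := b)
  rw [numCycles, numCycles, ← hglue, Setoid.card_quotient_glue_add_one hsplit]

theorem numCycles_swap_mul_of_not_sameCycle (hab : a ≠ b) (h : ¬ f.SameCycle a b) :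
    numCycles (swap a b * f) + 1 = numCycles f := by
  simpa only [swap_mul_self_mul] using
    (numCycles_swap_mul_of_sameCycle hab ((sameCycle_swap_mul_iff hab).2 h)).symm

theorem sameCycle_swap_apply_mul_iff {u v : α} (hu : u ≠ x) (hv : v ≠ x) :
    (swap x (f x) * f).SameCycle u v ↔ f.SameCycle u v := by
  have hx : IsFixedPt (swap x (f x) * f) x := by
    rw [IsFixedPt, mul_apply, swap_apply_right]
  have hf : f.SameCycle x (f x) := sameCycle_apply_right.2 SameCycle.rfl
  refine ⟨fun h => (Setoid.glue_eq_self hf).le (sameCycle_setoid_swap_mul_le h), fun h => ?_⟩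
  rcases (swap_mul_self_mul x (f x) f ▸ sameCycle_setoid_swap_mul_le) h with h | ⟨h, -⟩ | ⟨-, h⟩
  · exact h
  · exact absurd (h.eq_of_right hx) hu
  · exact absurd (h.eq_of_left hx).symm hv

theorem sameCycle_finRotate {p : ℕ} (x y : Fin p) : (finRotate p).SameCycle x y := by
  rcases lt_or_ge p 2 with hp | hp
  · obtain rfl : x = y := Fin.ext (by omega)
    exact SameCycle.rfl
  · have hmove : ∀ z, finRotate p z ≠ z := fun z => by
      rw [← Perm.mem_support, support_finRotate_of_le hp]; exact Finset.mem_univ z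
    exact (isCycle_finRotate_of_le hp).sameCycle (hmove x) (hmove y)

theorem numCycles_finRotate {p : ℕ} (hp : 0 < p) : numCycles (finRotate p) = 1 :=
  have : Nonempty (Fin p) := ⟨⟨0, hp⟩⟩
  numCycles_eq_one sameCycle_finRotate

end Equiv.Perm

namespace IsNoncrossingPerm

variable {p : ℕ} {σ : Perm (Fin p)} {x : Fin p}

theorem mem_Icc_of_sameCycle (hσ : IsNoncrossingPerm σ) (hx : IsGreatest σ.support x)
    {y : Fin p} (h : σ.SameCycle x y) : y ∈ Set.Icc (σ x) x :=
  (hσ.1 x y h).2 (apply_lt_of_isGreatest_support hx).le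

theorem apply_mem_Ioc (hσ : IsNoncrossingPerm σ) (hx : IsGreatest σ.support x) {z : Fin p}
    (hz : z ∈ Set.Ico (σ x) x) : σ z ∈ Set.Ioc (σ x) x := by
  have hcycle : ∀ y, σ.SameCycle x y → σ x ≤ y := fun y hy => (hσ.mem_Icc_of_sameCycle hx hy).1
  refine ⟨?_, ?_⟩
  · rcases hz.1.eq_or_lt with rfl | hlt
    · refine lt_of_le_of_ne (hcycle _ (sameCycle_apply_right.2 (sameCycle_apply_right.2 .rfl))) ?_
      exact (mem_support.1 (apply_mem_support.2 hx.1)).symm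
    · -- otherwise `σ z < σ x < z < x` and the cycles of `z` and `x` would cross
      by_contra! hle
      have hne : σ z ≠ σ x := fun h => hz.2.ne (σ.injective h)
      have := hσ.2 (σ z) (σ x) z x (lt_of_le_of_ne hle hne) hlt hz.2
        (sameCycle_apply_left.2 .rfl) (sameCycle_apply_left.2 .rfl)
      exact (lt_of_le_of_ne hle hne).not_ge
        (hcycle _ ((sameCycle_apply_right.2 .rfl).trans this.symm))
  · by_cases hzs : z ∈ σ.support
    · exact hx.2 (apply_mem_support.2 hzs)
    · rw [notMem_support.1 hzs]; exact hz.2.le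

theorem mapsTo_mul_finRotate_inv (hσ : IsNoncrossingPerm σ) (hx : IsGreatest σ.support x) :
    Set.MapsTo (σ * (finRotate p)⁻¹) (Set.Ioc (σ x) x) (Set.Ioc (σ x) x) := by
  intro y hy
  have : NeZero p := ⟨fun h => (h ▸ x).elim0⟩
  have hpred : (((finRotate p)⁻¹ y : Fin p) : ℕ) = y - 1 :=
    coe_finRotate_symm_of_ne_zero (Fin.pos_iff_ne_zero.1 (lt_of_le_of_lt (Fin.zero_le _) hy.1))
  refine hσ.apply_mem_Ioc hx ⟨?_, ?_⟩ <;>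
    simp only [Set.mem_Ioc, Fin.le_def, Fin.lt_def, hpred] at hy ⊢ <;> omega

theorem swap_mul (hσ : IsNoncrossingPerm σ) (hx : IsGreatest σ.support x) :
    IsNoncrossingPerm (swap x (σ x) * σ) := by
  set σ' := swap x (σ x) * σ
  have hfix : IsFixedPt σ' x := by rw [IsFixedPt, mul_apply, swap_apply_right]
  have hne : ∀ {u v}, σ'.SameCycle u v → u ≠ v → u ≠ x ∧ v ≠ x := fun h huv =>
    ⟨fun hu => huv (hu ▸ h.eq_of_left (hu ▸ hfix)),
      fun hv => huv (hv ▸ h.eq_of_right (hv ▸ hfix))⟩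
  refine ⟨fun u v huv => ?_, fun a b c d hab hbc hcd hac hbd => ?_⟩
  · rcases eq_or_ne u v with rfl | huv'
    · exact ⟨fun _ h => lt_irrefl u h.1, fun h => ⟨h, le_rfl⟩⟩
    obtain ⟨hux, hvx⟩ := hne huv huv'
    have hsv := (sameCycle_swap_apply_mul_iff hux hvx).1 huv
    by_cases hu : σ u = x
    · have hxu : σ.SameCycle x u :=
        (hu ▸ (sameCycle_apply_right.2 SameCycle.rfl : σ.SameCycle u (σ u))).symm
      have hu' := hσ.mem_Icc_of_sameCycle hx hxu
      have hv' := hσ.mem_Icc_of_sameCycle hx (hxu.trans hsv)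
      have hvu : v ≤ u := not_lt.1 fun h =>
        (hσ.1 u v hsv).1 (hu ▸ lt_of_le_of_ne hu'.2 hux) ⟨h, hu ▸ lt_of_le_of_ne hv'.2 hvx⟩
      rw [mul_apply, hu, swap_apply_left]
      exact ⟨fun h => absurd hu'.1 h.not_ge, fun _ => ⟨hv'.1, hvu⟩⟩
    · rw [mul_apply, swap_apply_of_ne_of_ne hu (σ.injective.ne hux)]
      exact hσ.1 u v hsv
  · obtain ⟨hax, hcx⟩ := hne hac (hab.trans hbc).ne
    obtain ⟨hbx, hdx⟩ := hne hbd (hbc.trans hcd).ne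
    exact (sameCycle_swap_apply_mul_iff hax hbx).2 (hσ.2 a b c d hab hbc hcd
      ((sameCycle_swap_apply_mul_iff hax hcx).1 hac)
      ((sameCycle_swap_apply_mul_iff hbx hdx).1 hbd))

theorem numCycles_mul_finRotate_inv_add (hp : 0 < p) (hσ : IsNoncrossingPerm σ) :
    numCycles (σ * (finRotate p)⁻¹) + numCycles σ = p + 1 := by
  induction hn : σ.support.card using Nat.strong_induction_on generalizing σ with
  | _ n ih =>
  rcases σ.support.eq_empty_or_nonempty with h | hne
  · rw [support_eq_empty_iff.1 h, one_mul, numCycles_inv, numCycles_finRotate hp, numCycles_one,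
      Nat.card_eq_fintype_card, Fintype.card_fin, add_comm]
  · have hx := σ.support.isGreatest_max' hne
    set x := σ.support.max' hne
    have hxσ : σ x ≠ x := (apply_lt_of_isGreatest_support hx).ne
    have hsplit := numCycles_swap_mul_of_sameCycle hxσ.symm (sameCycle_apply_right.2 .rfl)
    have hjoin := numCycles_swap_mul_of_not_sameCycle (f := σ * (finRotate p)⁻¹) hxσ.symm
      fun h => (h.mem_of_mapsTo (hσ.mapsTo_mul_finRotate_inv hx)
        ⟨apply_lt_of_isGreatest_support hx, le_rfl⟩).1.false
    have hsmaller := ih _ (hn ▸ card_support_swap_mul hxσ) (hσ.swap_mul hx) rfl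
    rw [mul_assoc] at hsmaller
    omega

end IsNoncrossingPerm

/-- Multiplicativity of `φ(σ,τ) = |στ⁻¹| - |τ|` : for noncrossing `σ` one has
`φ(σ,γ) = φ(σ,σ)`, i.e. `|σγ⁻¹| - 1 = p - |σ| = |σσ⁻¹| - |σ|`. -/
theorem phi_mul_inv_multiplicative (p : ℕ) (hp : 0 < p)
    (σ : Equiv.Perm (Fin p)) (hσ : IsNoncrossingPerm σ) :
    cycleCount (σ * (finRotate p)⁻¹) - cycleCount (finRotate p) = p - cycleCount σ ∧
    p - cycleCount σ = cycleCount (σ * σ⁻¹) - cycleCount σ := by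
  have hsum := hσ.numCycles_mul_finRotate_inv_add hp
  have hγ := numCycles_finRotate hp
  have hone : numCycles (1 : Perm (Fin p)) = p := by
    rw [numCycles_one, Nat.card_eq_fintype_card, Fintype.card_fin]
  show numCycles _ - numCycles _ = p - numCycles σ ∧ p - numCycles σ = numCycles _ - numCycles σ
  rw [mul_inv_cancel, hone, hγ]
  omega
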